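/- Define F(ρ, φ) = (ρ cos φ, ρ sin φ, (1/3)(ρ² − 2)^{3/2}) for ρ > √2 and φ ∈ ℝ. Then for every such (ρ, φ) the partial derivatives of F satisfy, with respect to the Euclidean inner product ⟨·,·⟩ on ℝ³: ⟨∂F/∂ρ, ∂F/∂ρ⟩ = (ρ² − 1)², ⟨∂F/∂ρ, ∂F/∂φ⟩ = 0, and ⟨∂F/∂φ, ∂F/∂φ⟩ = ρ² (so F is an isometric immersion of the metric g₁₋ = (ρ²−1)² dρ² + ρ² dφ², restricted to ρ > √2, into Euclidean ℝ³). Moreover every point (X, Y, Z) in the image of F satisfies the algebraic equation (X² + Y² − 2)³ − 9Z² = 0. -/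

import Mathlib

/-!
Both coordinate derivatives of `F` are explicit: `∂F/∂φ = (-ρ sin φ, ρ cos φ, 0)` and
`∂F/∂ρ = (cos φ, sin φ, ρ (ρ² - 2)^{1/2})`, the last because `d/dρ (ρ² - 2)^{3/2} = 3ρ (ρ² - 2)^{1/2}`.
The metric coefficients then follow from `cos² + sin² = 1` and the identity
`1 + ρ² (ρ² - 2) = (ρ² - 1)²`, and the equation of the image from `X² + Y² = ρ²` and
`((ρ² - 2)^{3/2})² = (ρ² - 2)³`, valid since `ρ² - 2 ≥ 0` for `ρ > √2`.
-/

/-- The Euclidean inner product on ℝ³. -/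
def dot3 (u v : Fin 3 → ℝ) : ℝ := u 0 * v 0 + u 1 * v 1 + u 2 * v 2

/-- The embedding `F(ρ,φ) = (ρ cos φ, ρ sin φ, (1/3)(ρ²-2)^{3/2})` of the portion
`ρ > √2` of the surface `g₁₋ = (ρ²-1)² dρ² + ρ² dφ²` into ℝ³. -/
noncomputable def Fminus (ρ φ : ℝ) : Fin 3 → ℝ :=
  ![ρ * Real.cos φ, ρ * Real.sin φ, (1 / 3) * (ρ ^ 2 - 2) ^ ((3 : ℝ) / 2)]

@[simp]
lemma dot3_vecCons (a b c d e f : ℝ) : dot3 ![a, b, c] ![d, e, f] = a * d + b * e + c * f := rfl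

lemma sq_rpow_div_two {x : ℝ} (hx : 0 ≤ x) (a : ℝ) : (x ^ (a / 2)) ^ 2 = x ^ a := by
  rw [← Real.rpow_natCast, ← Real.rpow_mul hx]
  norm_num

lemma hasDerivAt_Fminus_radial (ρ φ : ℝ) :
    HasDerivAt (fun r => Fminus r φ)
      ![Real.cos φ, Real.sin φ, ρ * (ρ ^ 2 - 2) ^ ((1 : ℝ) / 2)] ρ := by
  rw [hasDerivAt_pi]
  intro i
  fin_cases i
  · simpa [Fminus] using (hasDerivAt_id ρ).mul_const (Real.cos φ)
  · simpa [Fminus] using (hasDerivAt_id ρ).mul_const (Real.sin φ)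
  · have hsq_sub : HasDerivAt (fun r : ℝ => r ^ 2 - 2) (2 * ρ) ρ := by
      simpa using (hasDerivAt_pow 2 ρ).sub_const 2
    -- the exponent `3/2 ≥ 1` makes `rpow` differentiable even where the base vanishes
    have hpow : HasDerivAt (fun r : ℝ => (1 / 3 : ℝ) * (r ^ 2 - 2) ^ ((3 : ℝ) / 2))
        (ρ * (ρ ^ 2 - 2) ^ ((1 : ℝ) / 2)) ρ := by
      refine ((hsq_sub.rpow_const (Or.inr (by norm_num))).const_mul _).congr_deriv ?_
      norm_num
      ring
    simpa [Fminus] using hpow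

lemma hasDerivAt_Fminus_angular (ρ φ : ℝ) :
    HasDerivAt (fun t => Fminus ρ t) ![-(ρ * Real.sin φ), ρ * Real.cos φ, 0] φ := by
  rw [hasDerivAt_pi]
  intro i
  fin_cases i
  · simpa [Fminus, mul_comm] using (Real.hasDerivAt_cos φ).const_mul ρ
  · simpa [Fminus, mul_comm] using (Real.hasDerivAt_sin φ).const_mul ρ
  · simpa [Fminus] using hasDerivAt_const φ _

theorem stmt_16 :
    ∀ ρ φ : ℝ, Real.sqrt 2 < ρ →
      -- F is an isometric immersion of g₁₋ = (ρ²-1)² dρ² + ρ² dφ² for ρ > √2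
      dot3 (deriv (fun r => Fminus r φ) ρ) (deriv (fun r => Fminus r φ) ρ)
          = (ρ ^ 2 - 1) ^ 2 ∧
      dot3 (deriv (fun r => Fminus r φ) ρ) (deriv (fun t => Fminus ρ t) φ) = 0 ∧
      dot3 (deriv (fun t => Fminus ρ t) φ) (deriv (fun t => Fminus ρ t) φ) = ρ ^ 2 ∧
      -- every point (X,Y,Z) in the image of F satisfies (X²+Y²-2)³ - 9Z² = 0
      ((Fminus ρ φ 0) ^ 2 + (Fminus ρ φ 1) ^ 2 - 2) ^ 3 - 9 * (Fminus ρ φ 2) ^ 2 = 0 := by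
  intro ρ φ hρ
  have hbase : 0 ≤ ρ ^ 2 - 2 := by
    have hρ_pos : 0 < ρ := (Real.sqrt_nonneg 2).trans_lt hρ
    linarith [(Real.sqrt_lt' hρ_pos).1 hρ]
  have hhalf : ((ρ ^ 2 - 2) ^ ((1 : ℝ) / 2)) ^ 2 = ρ ^ 2 - 2 := by
    simpa using sq_rpow_div_two hbase 1
  have hthree_halves : ((ρ ^ 2 - 2) ^ ((3 : ℝ) / 2)) ^ 2 = (ρ ^ 2 - 2) ^ 3 := by
    simpa using sq_rpow_div_two hbase 3
  have hpyth := Real.sin_sq_add_cos_sq φ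
  rw [(hasDerivAt_Fminus_radial ρ φ).deriv, (hasDerivAt_Fminus_angular ρ φ).deriv]
  simp only [dot3_vecCons, Fminus, Matrix.cons_val_zero, Matrix.cons_val_one,
    Matrix.cons_val_two, Matrix.head_cons, Matrix.tail_cons]
  refine ⟨?_, ?_, ?_, ?_⟩
  · linear_combination hpyth + ρ ^ 2 * hhalf
  · ring
  · linear_combination ρ ^ 2 * hpyth
  · have hXY : (ρ * Real.cos φ) ^ 2 + (ρ * Real.sin φ) ^ 2 = ρ ^ 2 := by
      linear_combination ρ ^ 2 * hpyth
    rw [hXY]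
    linear_combination -hthree_halves
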